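/- Let G be a connected subgroup of GL(4,ℝ) (connected in the subspace topology). Suppose B₁ and B₂ are two linearly independent nondegenerate symmetric bilinear forms on ℝ⁴ both preserved by every element of G (i.e. Bᵢ(g·v, g·w) = Bᵢ(v,w) for all g ∈ G, v,w ∈ ℝ⁴, i = 1,2). Then G acts reducibly on ℝ⁴, i.e. there exists a G-invariant linear subspace W with 0 ≠ W ≠ ℝ⁴. -/

import Mathlib

/-!
Let `A` be the endomorphism with `B₁ (A v) w = B₂ v w`. It is `B₁`-self-adjoint, commutes with
`G`, and is not a scalar because `B₁` and `B₂` are independent. For an irreducible factor `q` of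
the minimal polynomial of `A`, the kernel of `q(A)` is a nonzero `G`-invariant subspace, which is
proper unless `q(A) = 0`. In that case, if `z` is a complex root of `q`, then
`J = (A - re z) / im z` satisfies `J² = -1`. So `ℝ⁴` becomes a complex plane on which `G` acts
`ℂ`-linearly, preserving the `ℂ`-bilinear form with real part `B₁`. A nondegenerate symmetric
form on `ℂ²` has exactly two isotropic lines. The group `G` permutes these lines, and since it is
connected and contains the identity, it preserves each of them.
-/

open Polynomial Module

namespace Module.End

variable {R M : Type*} [CommRing R] [AddCommGroup M] [Module R M]

theorem mem_ker_aeval_of_commute {A g : End R M} (h : Commute g A) (p : R[X]) {v : M}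
    (hv : v ∈ LinearMap.ker (aeval A p)) : g v ∈ LinearMap.ker (aeval A p) := by
  have hc : Commute g (aeval A p) :=
    Algebra.commute_of_mem_adjoin_singleton_of_commute (aeval_mem_adjoin_singleton R A) h
  rw [LinearMap.mem_ker] at hv ⊢
  rw [← mul_apply, ← hc.eq, mul_apply, hv, map_zero]

theorem exists_irreducible_ker_aeval_ne_bot {K V : Type*} [Field K] [AddCommGroup V] [Module K V]
    [FiniteDimensional K V] [Nontrivial V] (A : End K V) :
    ∃ q : K[X], Irreducible q ∧ LinearMap.ker (aeval A q) ≠ ⊥ := by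
  have hA : IsIntegral K A := Algebra.IsIntegral.isIntegral A
  obtain ⟨q, hqm, hq, r, hr⟩ := exists_monic_irreducible_factor _ (minpoly.not_isUnit K A)
  refine ⟨q, hq, fun hker => ?_⟩
  have hr₀ : aeval A r = 0 := LinearMap.ext fun v => LinearMap.ker_eq_bot'.mp hker _ <| by
    rw [← mul_apply, ← map_mul, ← hr, minpoly.aeval, LinearMap.zero_apply]
  have hrdvd : DvdNotUnit r (minpoly K A) :=
    ⟨fun h => minpoly.ne_zero hA (by rw [hr, h, mul_zero]), q, hq.not_isUnit, by rw [hr, mul_comm]⟩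
  exact minpoly.aeval_ne_zero_of_dvdNotUnit_minpoly hA
    (hqm.of_mul_monic_left (hr ▸ minpoly.monic hA)) hrdvd hr₀

end Module.End

theorem Irreducible.eq_algebraMap_or_exists_mul_self_eq_neg_one {R : Type*} [Ring R]
    [Algebra ℝ R] {q : ℝ[X]} (hq : Irreducible q) {a : R} (ha : aeval a q = 0) :
    (∃ c : ℝ, a = algebraMap ℝ R c) ∨
      ∃ s c : ℝ, s • (a - algebraMap ℝ R c) * (s • (a - algebraMap ℝ R c)) = -1 := by
  obtain ⟨z, hz⟩ := IsAlgClosed.exists_aeval_eq_zero ℂ q (degree_pos_of_irreducible hq).ne'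
  have hmin : aeval a (minpoly ℝ z) = 0 := by
    rw [← minpoly.eq_of_irreducible hq hz, map_mul, ha, zero_mul]
  rcases eq_or_ne z.im 0 with him | him
  · left
    refine ⟨z.re, ?_⟩
    have hz' : z = algebraMap ℝ ℂ z.re := Complex.ext (by simp) (by simp [him])
    rwa [hz', minpoly.eq_X_sub_C, map_sub, aeval_X, aeval_C, sub_eq_zero] at hmin
  · right
    refine ⟨z.im⁻¹, z.re, ?_⟩
    obtain ⟨r, hr⟩ : minpoly ℝ z ∣ (X - C z.re) ^ 2 + C (z.im ^ 2) := by
      refine minpoly.dvd ℝ z ?_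
      apply Complex.ext <;> simp [sq]
    have h := congrArg (aeval a) hr
    rw [map_mul, hmin, zero_mul, map_add, map_pow, map_sub, aeval_X, aeval_C, aeval_C] at h
    have hs : z.im⁻¹ * z.im⁻¹ * z.im ^ 2 = 1 := by field_simp
    rw [smul_mul_smul_comm, ← sq (a - algebraMap ℝ R z.re), eq_neg_of_add_eq_zero_left h,
      smul_neg, Algebra.smul_def, ← map_mul, hs, map_one]

theorem PreconnectedSpace.forall_mem_of_mem_union {X Y : Type*} [TopologicalSpace X]
    [PreconnectedSpace X] [TopologicalSpace Y] {f : X → Y} (hf : Continuous f) {s t : Set Y}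
    (hs : IsClosed s) (ht : IsClosed t) (hst : ∀ x, f x ∈ s ∪ t) (hdisj : ∀ x, f x ∉ s ∩ t)
    {x₀ : X} (hx₀ : f x₀ ∈ s) (x : X) : f x ∈ s := by
  have hclopen : IsClopen (f ⁻¹' s) := by
    refine ⟨hs.preimage hf, ?_⟩
    have hcompl : f ⁻¹' t = (f ⁻¹' s)ᶜ :=
      Set.ext fun y => ⟨fun h h' => hdisj y ⟨h', h⟩, fun h => (hst y).resolve_left h⟩
    exact isClosed_compl_iff.mp (hcompl ▸ ht.preimage hf)
  change x ∈ f ⁻¹' s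
  rw [hclopen.eq_univ ⟨x₀, hx₀⟩]
  trivial

theorem complex_smul_eq_re_smul_add_im_smul {E : Type*} [AddCommGroup E] [Module ℂ E]
    [Module ℝ E] [IsScalarTower ℝ ℂ E] (z : ℂ) (v : E) :
    z • v = z.re • v + z.im • (Complex.I • v) := by
  conv_lhs => rw [← Complex.re_add_im z, add_smul, mul_smul]
  exact congrArg₂ (· + ·) (algebraMap_smul ℂ z.re v) (algebraMap_smul ℂ z.im (Complex.I • v))

namespace LinearMap.BilinForm

section SymmComp

variable {K V : Type*} [Field K] [AddCommGroup V] [Module K V] [FiniteDimensional K V]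
  {B₁ B₂ : LinearMap.BilinForm K V} (hB₁ : B₁.Nondegenerate)

theorem commute_symmCompOfNondegenerate {g : End K V} (hg : Function.Surjective g)
    (h₁ : B₁.IsOrthogonal g) (h₂ : B₂.IsOrthogonal g) :
    Commute g (B₂.symmCompOfNondegenerate B₁ hB₁) := by
  refine LinearMap.ext fun v => (B₁.toDual hB₁).injective (LinearMap.ext fun w => ?_)
  obtain ⟨u, rfl⟩ := hg w
  simp only [toDual_def, End.mul_apply, h₁ _ u, symmCompOfNondegenerate_left_apply, h₂ v u]

theorem isSelfAdjoint_symmCompOfNondegenerate (h₁ : B₁.IsSymm) (h₂ : B₂.IsSymm) :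
    B₁.IsSelfAdjoint (B₂.symmCompOfNondegenerate B₁ hB₁) := fun v w => by
  rw [symmCompOfNondegenerate_left_apply, h₂.eq, h₁.eq, symmCompOfNondegenerate_left_apply]

theorem symmCompOfNondegenerate_ne_algebraMap (hind : LinearIndependent K ![B₁, B₂]) (c : K) :
    B₂.symmCompOfNondegenerate B₁ hB₁ ≠ algebraMap K (End K V) c := by
  intro hc
  have hB₂ : c • B₁ + (-1 : K) • B₂ = 0 := by
    ext v w
    have hv := symmCompOfNondegenerate_left_apply B₂ hB₁ w v
    rw [hc, Module.algebraMap_end_apply, map_smul, LinearMap.smul_apply] at hv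
    simp [← hv]
  have := (LinearIndependent.pair_iff (R := K) (x := B₁) (y := B₂)).mp hind c (-1) hB₂
  norm_num at this

end SymmComp

section Isotropic

variable {K E : Type*} [Field K] [AddCommGroup E] [Module K E] {C : LinearMap.BilinForm K E}

theorem exists_ne_zero_apply_self_eq_zero [IsAlgClosed K] [NeZero (2 : K)]
    (hE : 1 < finrank K E) : ∃ v ≠ (0 : E), C v v = 0 := by
  have : Nontrivial E := Module.nontrivial_of_finrank_pos (R := K) (by omega)
  obtain ⟨u, hu⟩ := exists_ne (0 : E)
  obtain ⟨w, huw⟩ := exists_linearIndependent_pair_of_one_lt_finrank hE hu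
  by_cases hw : C w w = 0
  · exact ⟨w, huw.ne_zero 1, hw⟩
  -- `C (u + z • w) (u + z • w)` is a quadratic in `z` with leading coefficient `C w w`.
  obtain ⟨s, hs⟩ := IsAlgClosed.exists_eq_mul_self (discrim (C w w) (C u w + C w u) (C u u))
  obtain ⟨z, hz⟩ := exists_quadratic_eq_zero hw ⟨s, hs⟩
  refine ⟨u + z • w, fun h => ?_, ?_⟩
  · exact one_ne_zero (LinearIndependent.pair_iff.mp huw 1 z (by rw [one_smul, h])).1
  · simp only [map_add, map_smul, LinearMap.add_apply, LinearMap.smul_apply, smul_eq_mul]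
    linear_combination hz

theorem exists_hyperbolic_pair [IsAlgClosed K] [NeZero (2 : K)] (hC : C.IsSymm)
    (hnd : C.SeparatingLeft) (hE : 1 < finrank K E) :
    ∃ v₀ v₁ : E, C v₀ v₀ = 0 ∧ C v₁ v₁ = 0 ∧ C v₀ v₁ = 1 := by
  obtain ⟨v₀, hv₀, h₀⟩ := exists_ne_zero_apply_self_eq_zero (C := C) hE
  obtain ⟨e, he⟩ : ∃ e, C v₀ e = 1 := by
    obtain ⟨w, hw⟩ : ∃ w, C v₀ w ≠ 0 := by
      by_contra! h
      exact hv₀ (hnd v₀ h)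
    exact ⟨(C v₀ w)⁻¹ • w, by rw [map_smul, smul_eq_mul, inv_mul_cancel₀ hw]⟩
  refine ⟨v₀, e - (C e e / 2) • v₀, h₀, ?_, ?_⟩
  · simp only [map_sub, map_smul, LinearMap.sub_apply, LinearMap.smul_apply, smul_eq_mul, h₀, he,
      hC.eq e v₀]
    field_simp
    ring
  · simp [h₀, he]

theorem disjoint_span_singleton_of_hyperbolic {v₀ v₁ : E} (h₀ : C v₀ v₀ = 0)
    (h₀₁ : C v₀ v₁ = 1) : Disjoint (K ∙ v₀) (K ∙ v₁) := by
  rw [Submodule.disjoint_def]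
  intro x hx₀ hx₁
  obtain ⟨a, rfl⟩ := Submodule.mem_span_singleton.mp hx₀
  obtain ⟨b, hb⟩ := Submodule.mem_span_singleton.mp hx₁
  have : b = 0 := by simpa [h₀, h₀₁] using congrArg (C v₀) hb
  rw [← hb, this, zero_smul]

theorem mem_span_singleton_or_of_apply_self_eq_zero [NeZero (2 : K)] (hC : C.IsSymm)
    (hE : finrank K E = 2) {v₀ v₁ : E} (h₀ : C v₀ v₀ = 0) (h₁ : C v₁ v₁ = 0) (h₀₁ : C v₀ v₁ = 1)
    {x : E} (hx : C x x = 0) : x ∈ K ∙ v₀ ∨ x ∈ K ∙ v₁ := by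
  have hli : LinearIndependent K ![v₀, v₁] := by
    refine LinearIndependent.pair_iff.mpr fun s t hst => ?_
    have ht : t = 0 := by simpa [h₀, h₀₁] using congrArg (C v₀) hst
    have hs : s = 0 := by simpa [h₁, hC.eq v₁ v₀, h₀₁, ht] using congrArg (C v₁) hst
    exact ⟨hs, ht⟩
  have : FiniteDimensional K E := Module.finite_of_finrank_eq_succ hE
  have hspan : Submodule.span K {v₀, v₁} = ⊤ := by
    rw [← Matrix.range_cons_cons_empty v₀ v₁ ![]]
    exact hli.span_eq_top_of_card_eq_finrank' (by simp [hE])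
  obtain ⟨a, b, rfl⟩ := Submodule.mem_span_pair.mp (hspan ▸ Submodule.mem_top : x ∈ _)
  have hab : a * b + b * a = 0 := by simpa [h₀, h₁, h₀₁, hC.eq v₁ v₀] using hx
  have hab' : (2 : K) * (a * b) = 0 := by linear_combination hab
  rcases mul_eq_zero.mp ((mul_eq_zero.mp hab').resolve_left two_ne_zero) with rfl | rfl
  · right
    simpa using Submodule.smul_mem _ b (Submodule.mem_span_singleton_self v₁)
  · left
    simpa using Submodule.smul_mem _ a (Submodule.mem_span_singleton_self v₀)

theorem exists_invariant_line_of_preconnectedSpace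
    {𝕜 : Type*} [NontriviallyNormedField 𝕜] [CompleteSpace 𝕜] [IsAlgClosed 𝕜] [NeZero (2 : 𝕜)]
    {E : Type*} [AddCommGroup E] [Module 𝕜 E] [TopologicalSpace E] [IsTopologicalAddGroup E]
    [ContinuousSMul 𝕜 E] [T2Space E] {X : Type*} [TopologicalSpace X] [PreconnectedSpace X]
    {C : LinearMap.BilinForm 𝕜 E} (hC : C.IsSymm) (hnd : C.SeparatingLeft)
    (hE : finrank 𝕜 E = 2) (ρ : X → E →ₗ[𝕜] E) (hρ : ∀ v, Continuous fun x => ρ x v) (x₀ : X)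
    (hx₀ : ρ x₀ = 1) (hinj : ∀ x, Function.Injective (ρ x)) (horth : ∀ x, C.IsOrthogonal (ρ x)) :
    ∃ W : Submodule 𝕜 E, W ≠ ⊥ ∧ W ≠ ⊤ ∧ ∀ x, ∀ v ∈ W, ρ x v ∈ W := by
  obtain ⟨v₀, v₁, h₀, h₁, h₀₁⟩ := exists_hyperbolic_pair hC hnd (by omega)
  have hdisj := disjoint_span_singleton_of_hyperbolic h₀ h₀₁
  have hv₀ : v₀ ≠ 0 := by rintro rfl; simp at h₀₁
  have hv₁ : v₁ ≠ 0 := by rintro rfl; simp at h₀₁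
  have hmem (x : X) : ρ x v₀ ∈ 𝕜 ∙ v₀ := by
    refine PreconnectedSpace.forall_mem_of_mem_union (hρ v₀)
      (Submodule.closed_of_finiteDimensional _) (Submodule.closed_of_finiteDimensional (𝕜 ∙ v₁))
      (fun x => mem_span_singleton_or_of_apply_self_eq_zero hC hE h₀ h₁ h₀₁ (by rw [horth, h₀]))
      (fun x hx => hv₀ (hinj x ?_)) (x₀ := x₀) (by simp [hx₀, Submodule.mem_span_singleton_self]) x
    rw [map_zero]
    exact Submodule.disjoint_def.mp hdisj _ hx.1 hx.2
  refine ⟨𝕜 ∙ v₀, by simpa using hv₀, fun htop => hv₁ ?_, fun x v hv => ?_⟩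
  · exact Submodule.disjoint_def.mp hdisj _ (htop ▸ Submodule.mem_top)
      (Submodule.mem_span_singleton_self v₁)
  · obtain ⟨a, rfl⟩ := Submodule.mem_span_singleton.mp hv
    rw [map_smul]
    exact Submodule.smul_mem _ a (hmem x)

end Isotropic

section ComplexOfRe

open Complex

variable {E : Type*} [AddCommGroup E] [Module ℂ E] [Module ℝ E] [IsScalarTower ℝ ℂ E]
  (B : LinearMap.BilinForm ℝ E) (hB : ∀ v w, B (I • v) w = B v (I • w))

/-- The `ℂ`-bilinear form with real part `B`; it exists because multiplication by `I` is
`B`-self-adjoint. -/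
def complexOfRe : LinearMap.BilinForm ℂ E :=
  LinearMap.mk₂ ℂ (fun v w => (B v w : ℂ) - B (I • v) w * I)
    (fun v₁ v₂ w => by simp only [smul_add, map_add, LinearMap.add_apply, ofReal_add]; ring)
    (fun z v w => by
      rw [smul_comm I z v, complex_smul_eq_re_smul_add_im_smul z v,
        complex_smul_eq_re_smul_add_im_smul z (I • v), smul_smul, I_mul_I, neg_one_smul]
      simp only [map_add, map_smul, map_neg, LinearMap.add_apply, LinearMap.smul_apply,
        LinearMap.neg_apply, smul_eq_mul]
      conv_rhs => rw [← re_add_im z]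
      push_cast
      linear_combination (z.im * B (I • v) w : ℂ) * I_sq)
    (fun v w₁ w₂ => by simp only [map_add, ofReal_add]; ring)
    (fun z v w => by
      simp only [hB]
      rw [complex_smul_eq_re_smul_add_im_smul z w, smul_add, smul_comm I z.re w,
        smul_comm I z.im (I • w), smul_smul I I, I_mul_I, neg_one_smul]
      simp only [map_add, map_smul, map_neg, smul_eq_mul]
      conv_rhs => rw [← re_add_im z]
      push_cast
      linear_combination (z.im * B v (I • w) : ℂ) * I_sq)

variable {B}

@[simp]
theorem complexOfRe_apply (v w : E) : complexOfRe B hB v w = B v w - B (I • v) w * I := rfl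

theorem isSymm_complexOfRe (hBs : B.IsSymm) : (complexOfRe B hB).IsSymm := by
  refine ⟨fun v w => ?_⟩
  rw [complexOfRe_apply, complexOfRe_apply, hBs.eq v w, hB, hBs.eq v]

theorem separatingLeft_complexOfRe (hBnd : B.SeparatingLeft) :
    (complexOfRe B hB).SeparatingLeft := fun v hv =>
  hBnd v fun w => by simpa using congrArg re (hv w)

theorem isOrthogonal_complexOfRe {g : E →ₗ[ℂ] E} (hg : B.IsOrthogonal g) :
    (complexOfRe B hB).IsOrthogonal g := fun v w => by
  rw [complexOfRe_apply, complexOfRe_apply, ← map_smul, hg, hg]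

end ComplexOfRe

theorem exists_invariant_submodule_of_mul_self_eq_neg_one {X : Type*} [TopologicalSpace X]
    [PreconnectedSpace X] {V : Type*} [AddCommGroup V] [Module ℝ V] [TopologicalSpace V]
    [IsTopologicalAddGroup V] [ContinuousSMul ℝ V] [T2Space V] [FiniteDimensional ℝ V]
    (hV : finrank ℝ V = 4) {J : End ℝ V} (hJ : J * J = -1) {B : LinearMap.BilinForm ℝ V}
    (hB : B.IsSymm) (hnd : B.SeparatingLeft) (hJB : B.IsSelfAdjoint J)
    (ρ : X → End ℝ V) (hρ : ∀ v, Continuous fun x => ρ x v) (x₀ : X) (hx₀ : ρ x₀ = 1)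
    (hinj : ∀ x, Function.Injective (ρ x)) (hcomm : ∀ x, Commute (ρ x) J)
    (horth : ∀ x, B.IsOrthogonal (ρ x)) :
    ∃ W : Submodule ℝ V, W ≠ ⊥ ∧ W ≠ ⊤ ∧ ∀ x, ∀ v ∈ W, ρ x v ∈ W := by
  let : Module ℂ V := Module.compHom V (Complex.liftAux J hJ).toRingHom
  have hsmul (z : ℂ) (v : V) : z • v = z.re • v + z.im • J v := by
    change Complex.liftAux J hJ z v = _
    simp [Complex.liftAux_apply]
  have : IsScalarTower ℝ ℂ V := ⟨fun r z v => by simp [hsmul, smul_add, mul_smul]⟩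
  have : ContinuousSMul ℂ V := by
    refine ⟨?_⟩
    have hJc : Continuous J := LinearMap.continuous_of_finiteDimensional J
    simp only [hsmul]
    fun_prop
  have : FiniteDimensional ℂ V := Module.Finite.of_restrictScalars_finite ℝ ℂ V
  have hE : finrank ℂ V = 2 := by
    have := Module.finrank_mul_finrank ℝ ℂ V
    rw [Complex.finrank_real_complex, hV] at this
    omega
  have hBI (v w : V) : B (Complex.I • v) w = B v (Complex.I • w) := by
    simpa [hsmul] using hJB v w
  let ρℂ (x : X) : V →ₗ[ℂ] V :=
    { toFun := ρ x
      map_add' := (ρ x).map_add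
      map_smul' := fun z v => by
        simp only [hsmul, map_add, map_smul, RingHom.id_apply, ← End.mul_apply, (hcomm x).eq] }
  obtain ⟨W, hW₀, hW₁, hWρ⟩ := exists_invariant_line_of_preconnectedSpace
    (isSymm_complexOfRe hBI hB) (separatingLeft_complexOfRe hBI hnd) hE ρℂ hρ x₀
    (LinearMap.ext fun v => by simp [ρℂ, hx₀]) hinj
    (fun x => isOrthogonal_complexOfRe hBI (horth x))
  exact ⟨W.restrictScalars ℝ, by simpa using hW₀, by simpa using hW₁, hWρ⟩

end LinearMap.BilinForm

open LinearMap.BilinForm Matrix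

theorem reducible_of_two_forms_connected_general
    (G : Subgroup (GL (Fin 4) ℝ))
    (hconn : IsConnected (G : Set (GL (Fin 4) ℝ)))
    (B₁ B₂ : LinearMap.BilinForm ℝ (Fin 4 → ℝ))
    (hsymm₁ : ∀ v w, B₁ v w = B₁ w v)
    (hsymm₂ : ∀ v w, B₂ v w = B₂ w v)
    (hnd₁ : ∀ v, (∀ w, B₁ v w = 0) → v = 0)
    (hind : LinearIndependent ℝ ![B₁, B₂])
    (hinv₁ : ∀ g ∈ G, ∀ v w : Fin 4 → ℝ,
      B₁ ((g : Matrix (Fin 4) (Fin 4) ℝ).mulVec v)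
         ((g : Matrix (Fin 4) (Fin 4) ℝ).mulVec w) = B₁ v w)
    (hinv₂ : ∀ g ∈ G, ∀ v w : Fin 4 → ℝ,
      B₂ ((g : Matrix (Fin 4) (Fin 4) ℝ).mulVec v)
         ((g : Matrix (Fin 4) (Fin 4) ℝ).mulVec w) = B₂ v w) :
    ∃ W : Submodule ℝ (Fin 4 → ℝ), W ≠ ⊥ ∧ W ≠ ⊤ ∧
      ∀ g ∈ G, ∀ v ∈ W, (g : Matrix (Fin 4) (Fin 4) ℝ).mulVec v ∈ W := by
  have hB₁ : B₁.Nondegenerate := .ofSeparatingLeft hnd₁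
  set A := B₂.symmCompOfNondegenerate B₁ hB₁
  let ρ (g : G) : End ℝ (Fin 4 → ℝ) := ((g : GL (Fin 4) ℝ) : Matrix (Fin 4) (Fin 4) ℝ).mulVecLin
  have hsurj (g : G) : Function.Surjective (ρ g) := fun w =>
    ⟨((g⁻¹ : G) : GL (Fin 4) ℝ) *ᵥ w, by simp [ρ, mulVec_mulVec]⟩
  have hcomm (g : G) : Commute (ρ g) A :=
    commute_symmCompOfNondegenerate hB₁ (hsurj g) (hinv₁ g g.2) (hinv₂ g g.2)
  obtain ⟨q, hq, hker⟩ := End.exists_irreducible_ker_aeval_ne_bot A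
  by_cases htop : LinearMap.ker (aeval A q) = ⊤
  swap
  · exact ⟨_, hker, htop, fun g hg v hv => End.mem_ker_aeval_of_commute (hcomm ⟨g, hg⟩) q hv⟩
  rcases hq.eq_algebraMap_or_exists_mul_self_eq_neg_one (LinearMap.ker_eq_top.mp htop) with
    ⟨c, hc⟩ | ⟨s, c, hJ⟩
  · exact absurd hc (symmCompOfNondegenerate_ne_algebraMap hB₁ hind c)
  have hJB : B₁.IsSelfAdjoint ⇑(s • (A - algebraMap ℝ _ c)) := by
    rw [Algebra.algebraMap_eq_smul_one]
    exact ((isSelfAdjoint_symmCompOfNondegenerate hB₁ ⟨hsymm₁⟩ ⟨hsymm₂⟩).sub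
      (LinearMap.isAdjointPair_one.smul c)).smul s
  have : PreconnectedSpace G := Subtype.preconnectedSpace hconn.isPreconnected
  obtain ⟨W, hW₀, hW₁, hW⟩ := exists_invariant_submodule_of_mul_self_eq_neg_one
    (finrank_fin_fun ℝ) hJ ⟨hsymm₁⟩ hnd₁ hJB ρ
    (fun v => (Units.continuous_val.comp continuous_subtype_val).matrix_mulVec continuous_const) 1
    (by ext; simp [ρ]) (fun g => mulVec_injective_of_isUnit (g : GL (Fin 4) ℝ).isUnit)
    (fun g => ((hcomm g).sub_right (Algebra.commute_algebraMap_right c _)).smul_right s)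
    (fun g => hinv₁ g g.2)
  exact ⟨W, hW₀, hW₁, fun g hg => hW ⟨g, hg⟩⟩

/-- **Theorem 3.1 (i).** If a connected subgroup `G` of `GL(4, ℝ)` preserves two
linearly independent nondegenerate symmetric bilinear forms on `ℝ⁴`, then `G`
acts reducibly on `ℝ⁴`. -/
theorem reducible_of_two_forms_connected
    (G : Subgroup (GL (Fin 4) ℝ))
    (hconn : IsConnected (G : Set (GL (Fin 4) ℝ)))
    (B₁ B₂ : LinearMap.BilinForm ℝ (Fin 4 → ℝ))
    (hsymm₁ : ∀ v w, B₁ v w = B₁ w v)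
    (hsymm₂ : ∀ v w, B₂ v w = B₂ w v)
    (hnd₁ : ∀ v, (∀ w, B₁ v w = 0) → v = 0)
    (hnd₂ : ∀ v, (∀ w, B₂ v w = 0) → v = 0)
    (hind : LinearIndependent ℝ ![B₁, B₂])
    (hinv₁ : ∀ g ∈ G, ∀ v w : Fin 4 → ℝ,
      B₁ ((g : Matrix (Fin 4) (Fin 4) ℝ).mulVec v)
         ((g : Matrix (Fin 4) (Fin 4) ℝ).mulVec w) = B₁ v w)
    (hinv₂ : ∀ g ∈ G, ∀ v w : Fin 4 → ℝ,
      B₂ ((g : Matrix (Fin 4) (Fin 4) ℝ).mulVec v)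
         ((g : Matrix (Fin 4) (Fin 4) ℝ).mulVec w) = B₂ v w) :
    ∃ W : Submodule ℝ (Fin 4 → ℝ), W ≠ ⊥ ∧ W ≠ ⊤ ∧
      ∀ g ∈ G, ∀ v ∈ W, (g : Matrix (Fin 4) (Fin 4) ℝ).mulVec v ∈ W :=
  reducible_of_two_forms_connected_general G hconn B₁ B₂ hsymm₁ hsymm₂ hnd₁ hind hinv₁ hinv₂
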